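/- If G is a finite simple graph, x ∈ V(G), and α is an optimal ordering of G, then prf_α(G) ≥ prf_{α_x}(G−x) + d(x), where d(x) is the degree of x and α_x is the ordering of G−x induced by α. In particular, prf(G) ≥ prf(G−x) + d(x). -/
import Mathlib

variable {V : Type*}

/-- The minimum position (in ordering `α`) over the closed neighborhood of `z`. -/
noncomputable def nbhdMin {n : ℕ} (G : SimpleGraph V) (α : V ≃ Fin n) (z : V) : ℕ :=
  sInf {m : ℕ | ∃ w, (w = z ∨ G.Adj w z) ∧ (α w : ℕ) = m}

/-- The profile of a vertex `z` in the ordering `α`. -/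
noncomputable def vtxProfile {n : ℕ} (G : SimpleGraph V) (α : V ≃ Fin n) (z : V) : ℕ :=
  (α z : ℕ) - nbhdMin G α z

/-- The profile of an ordering `α` of `G`. -/
noncomputable def ordProfile [Fintype V] {n : ℕ} (G : SimpleGraph V) (α : V ≃ Fin n) : ℕ :=
  ∑ z : V, vtxProfile G α z

/-- The profile of a graph `G`. -/
noncomputable def profile (G : SimpleGraph V) [Fintype V] : ℕ :=
  sInf {p : ℕ | ∃ α : V ≃ Fin (Fintype.card V), ordProfile G α = p}

lemma nbhdMin_mem {n : ℕ} (G : SimpleGraph V) (α : V ≃ Fin n) (z : V) :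
    ∃ w, (w = z ∨ G.Adj w z) ∧ (α w : ℕ) = nbhdMin G α z :=
  Nat.sInf_mem (⟨(α z : ℕ), z, Or.inl rfl, rfl⟩ :
    Set.Nonempty {m : ℕ | ∃ w, (w = z ∨ G.Adj w z) ∧ (α w : ℕ) = m})

lemma nbhdMin_le {n : ℕ} (G : SimpleGraph V) (α : V ≃ Fin n) {z w : V}
    (h : w = z ∨ G.Adj w z) : nbhdMin G α z ≤ (α w : ℕ) :=
  Nat.sInf_le ⟨w, h, rfl⟩

lemma key_count {n m : ℕ} {x : V} (α : V ≃ Fin n) (β : {v : V // v ≠ x} ≃ Fin m)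
    (hβ : ∀ u v : {v : V // v ≠ x}, β u < β v ↔ α ↑u < α ↑v)
    (u v : {v : V // v ≠ x}) (huv : (α ↑u : ℕ) ≤ (α ↑v : ℕ)) :
    ((β v : ℕ) - (β u : ℕ) ≤ (α ↑v : ℕ) - (α ↑u : ℕ)) ∧
    ((α ↑u : ℕ) < (α x : ℕ) → (α x : ℕ) < (α ↑v : ℕ) →
      (β v : ℕ) - (β u : ℕ) < (α ↑v : ℕ) - (α ↑u : ℕ)) := by
  classical
  have hlt : ∀ a b : {v : V // v ≠ x}, (β a : ℕ) < (β b : ℕ) ↔ (α ↑a : ℕ) < (α ↑b : ℕ) :=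
    fun a b => by simpa only [Fin.lt_def] using hβ a b
  have hle : ∀ a b : {v : V // v ≠ x}, (β a : ℕ) ≤ (β b : ℕ) ↔ (α ↑a : ℕ) ≤ (α ↑b : ℕ) := by
    intro a b
    rw [← not_lt, ← not_lt]
    exact not_congr (hlt b a)
  have hFinj : Function.Injective (fun j : Fin m => α ↑(β.symm j)) := fun a b h =>
    β.symm.injective (Subtype.coe_injective (α.injective h))
  set s : Finset (Fin m) := Finset.Icc (β u) (β v) with hs
  have hsub : s.image (fun j : Fin m => α ↑(β.symm j)) ⊆ Finset.Icc (α ↑u) (α ↑v) := by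
    intro j hj
    obtain ⟨i, hi, rfl⟩ := Finset.mem_image.mp hj
    rw [Finset.mem_Icc] at hi ⊢
    constructor
    · rw [Fin.le_def]
      refine (hle u (β.symm i)).mp ?_
      rw [Equiv.apply_symm_apply]
      exact hi.1
    · rw [Fin.le_def]
      refine (hle (β.symm i) v).mp ?_
      rw [Equiv.apply_symm_apply]
      exact hi.2
  have hβuv : (β u : ℕ) ≤ (β v : ℕ) := (hle u v).mpr huv
  have hscard : s.card = (β v : ℕ) + 1 - (β u : ℕ) := Fin.card_Icc _ _
  have himcard : (s.image (fun j : Fin m => α ↑(β.symm j))).card = s.card :=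
    Finset.card_image_of_injective s hFinj
  have hIcard : (Finset.Icc (α ↑u) (α ↑v)).card = (α ↑v : ℕ) + 1 - (α ↑u : ℕ) :=
    Fin.card_Icc _ _
  constructor
  · have := Finset.card_le_card hsub
    omega
  · intro h1 h2
    have hxmem : α x ∈ Finset.Icc (α ↑u) (α ↑v) := by
      rw [Finset.mem_Icc, Fin.le_def, Fin.le_def]
      omega
    have hsub2 : s.image (fun j : Fin m => α ↑(β.symm j)) ⊆
        (Finset.Icc (α ↑u) (α ↑v)).erase (α x) := by
      intro j hj
      refine Finset.mem_erase.mpr ⟨?_, hsub hj⟩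
      obtain ⟨i, hi, rfl⟩ := Finset.mem_image.mp hj
      intro hcontra
      exact (β.symm i).2 (α.injective hcontra)
    have := Finset.card_le_card hsub2
    rw [Finset.card_erase_of_mem hxmem] at this
    omega

/-- Lemma 2.3: for an optimal ordering `α` of `G` and a vertex `x`,
`prf_α(G) ≥ prf_{α_x}(G - x) + d(x)`; in particular `prf(G) ≥ prf(G - x) + d(x)`. -/
theorem profile_delete_vertex [Fintype V] [DecidableEq V] (G : SimpleGraph V) (x : V)
    (α : V ≃ Fin (Fintype.card V))
    (hopt : ordProfile G α = profile G)
    (β : {v : V // v ≠ x} ≃ Fin (Fintype.card {v : V // v ≠ x}))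
    (hβ : ∀ u v : {v : V // v ≠ x}, β u < β v ↔ α ↑u < α ↑v) :
    ordProfile (G.induce {v : V | v ≠ x}) β + (G.neighborSet x).ncard ≤ ordProfile G α ∧
    profile (G.induce {v : V | v ≠ x}) + (G.neighborSet x).ncard ≤ profile G := by
  classical
  set G' := G.induce {v : V | v ≠ x} with hG'
  -- pointwise estimate
  have hpt : ∀ z : {v : V // v ≠ x},
      vtxProfile G' β z + (if G.Adj x ↑z ∧ (α x : ℕ) < (α ↑z : ℕ) then 1 else 0)
        ≤ vtxProfile G α ↑z := by
    intro z
    obtain ⟨w0, hw0mem, hw0⟩ := nbhdMin_mem G' β z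
    obtain ⟨w1, hw1mem, hw1⟩ := nbhdMin_mem G α ↑z
    have hw0N : (↑w0 : V) = ↑z ∨ G.Adj ↑w0 ↑z := by
      rcases hw0mem with h | h
      · exact Or.inl (congrArg _ h)
      · exact Or.inr h
    have h3 : (α w1 : ℕ) ≤ (α ↑w0 : ℕ) := hw1 ▸ nbhdMin_le G α hw0N
    have h2 : (α w1 : ℕ) ≤ (α ↑z : ℕ) := hw1 ▸ nbhdMin_le G α (Or.inl rfl)
    have hβ0z : (β w0 : ℕ) ≤ (β z : ℕ) := hw0 ▸ nbhdMin_le G' β (Or.inl rfl)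
    have hlt : ∀ a b : {v : V // v ≠ x}, (β a : ℕ) < (β b : ℕ) ↔ (α ↑a : ℕ) < (α ↑b : ℕ) :=
      fun a b => by simpa only [Fin.lt_def] using hβ a b
    have huv : (α ↑w0 : ℕ) ≤ (α ↑z : ℕ) := by
      by_contra h
      have := (hlt z w0).mpr (by omega)
      omega
    have hkey := key_count α β hβ w0 z huv
    unfold vtxProfile
    rw [← hw0, ← hw1]
    by_cases hP : G.Adj x ↑z ∧ (α x : ℕ) < (α ↑z : ℕ)
    · rw [if_pos hP]
      have h4 : (α w1 : ℕ) ≤ (α x : ℕ) := hw1 ▸ nbhdMin_le G α (Or.inr hP.1)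
      by_cases hc : (α ↑w0 : ℕ) < (α x : ℕ)
      · have := hkey.2 hc hP.2
        omega
      · have hne : (α x : ℕ) ≠ (α ↑w0 : ℕ) := by
          intro h
          exact w0.2 (α.injective (Fin.val_injective h)).symm
        have := hkey.1
        omega
    · rw [if_neg hP]
      have := hkey.1
      omega
  -- sum splitting
  have hsplit : ∀ f : V → ℕ, ∑ z : V, f z = f x + ∑ z : {v : V // v ≠ x}, f ↑z := by
    intro f
    rw [Fintype.sum_eq_add_sum_compl x f]
    congr 1
    exact Finset.sum_subtype (p := fun v => v ≠ x) ({x}ᶜ) (fun v => by simp) f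
  -- vertex x estimate
  set A : Finset V := Finset.univ.filter (fun z => G.Adj x z ∧ (α z : ℕ) < (α x : ℕ)) with hA
  have hxA : A.card ≤ vtxProfile G α x := by
    have hinj : Function.Injective (fun z : V => (α z : ℕ)) :=
      Fin.val_injective.comp α.injective
    have hsub : A.image (fun z => (α z : ℕ)) ⊆ Finset.Ico (nbhdMin G α x) (α x : ℕ) := by
      intro j hj
      obtain ⟨z, hz, rfl⟩ := Finset.mem_image.mp hj
      rw [hA, Finset.mem_filter] at hz
      rw [Finset.mem_Ico]
      exact ⟨nbhdMin_le G α (Or.inr hz.2.1.symm), hz.2.2⟩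
    have := Finset.card_le_card hsub
    rw [Finset.card_image_of_injective _ hinj, Nat.card_Ico] at this
    unfold vtxProfile
    omega
  -- neighbors after x
  set B : Finset V := Finset.univ.filter (fun z => G.Adj x z ∧ (α x : ℕ) < (α z : ℕ)) with hB
  have hBsum : ∑ z : {v : V // v ≠ x},
      (if G.Adj x ↑z ∧ (α x : ℕ) < (α ↑z : ℕ) then 1 else 0) = B.card := by
    have := hsplit (fun z => if G.Adj x z ∧ (α x : ℕ) < (α z : ℕ) then 1 else 0)
    simp only [G.irrefl, false_and, if_false, zero_add] at this
    rw [← this, hB]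
    rw [Finset.card_filter]
  -- degree count
  have hd : A.card + B.card = (G.neighborSet x).ncard := by
    have h1 : A = (G.neighborFinset x).filter (fun z => (α z : ℕ) < (α x : ℕ)) := by
      ext z
      simp [hA, SimpleGraph.mem_neighborFinset, and_comm]
    have h2 : B = (G.neighborFinset x).filter (fun z => ¬ (α z : ℕ) < (α x : ℕ)) := by
      ext z
      simp only [hB, Finset.mem_filter, Finset.mem_univ, true_and,
        SimpleGraph.mem_neighborFinset, not_lt]
      constructor
      · rintro ⟨h, h'⟩; exact ⟨h, le_of_lt h'⟩
      · rintro ⟨h, h'⟩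
        refine ⟨h, lt_of_le_of_ne h' ?_⟩
        intro hc
        exact h.ne' (α.injective (Fin.val_injective hc.symm))
    rw [h1, h2, Finset.card_filter_add_card_filter_not,
      Set.ncard_eq_toFinset_card', SimpleGraph.neighborFinset_def]
  have main : ordProfile G' β + (G.neighborSet x).ncard ≤ ordProfile G α := by
    rw [show ordProfile G α = vtxProfile G α x + ∑ z : {v : V // v ≠ x}, vtxProfile G α ↑z from
      hsplit _]
    calc ordProfile G' β + (G.neighborSet x).ncard
        = (∑ z : {v : V // v ≠ x}, vtxProfile G' β z) + (A.card + B.card) := by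
          rw [hd]; rfl
      _ = A.card + ((∑ z : {v : V // v ≠ x}, vtxProfile G' β z) +
            ∑ z : {v : V // v ≠ x},
              (if G.Adj x ↑z ∧ (α x : ℕ) < (α ↑z : ℕ) then 1 else 0)) := by
          rw [hBsum]; ring
      _ = A.card + ∑ z : {v : V // v ≠ x}, (vtxProfile G' β z +
            (if G.Adj x ↑z ∧ (α x : ℕ) < (α ↑z : ℕ) then 1 else 0)) := by
          rw [Finset.sum_add_distrib]
      _ ≤ vtxProfile G α x + ∑ z : {v : V // v ≠ x}, vtxProfile G α ↑z := by
          exact Nat.add_le_add hxA (Finset.sum_le_sum (fun z _ => hpt z))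
  refine ⟨main, ?_⟩
  have h1 : profile G' ≤ ordProfile G' β := Nat.sInf_le ⟨β, rfl⟩
  rw [← hopt]
  exact le_trans (Nat.add_le_add_right h1 _) main
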